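/- arXiv:1503.04893 — 4 statements merged into one kernel-verified Lean document; each statement's English description precedes it below -/
import Mathlib

section
/- Let w₁, w₂, w₃ be positive integers, y₁, y₂, y₃ nonnegative integers and n a nonnegative integer. Define E(w₁,w₂,w₃) = ∑_{k+l+m=n} binom(n;k,l,m) · [w₂w₃]_q^k · [w₁w₃]_q^l · [w₁w₂]_q^m · q^{w₁w₂w₃(l+m)y₁} · q^{w₁w₂w₃ m y₂} · β_{k,q^{w₂w₃}}^{(l+m+1)}(w₁y₁) · β_{l,q^{w₁w₃}}^{(m+1)}(w₂y₂) · β_{m,q^{w₁w₂}}(w₃y₃), where the sum is over all triples (k,l,m) of nonnegative integers with k+l+m = n. Then E(w_{σ(1)}, w_{σ(2)}, w_{σ(3)}) = E(w₁, w₂, w₃) for every permutation σ of {1,2,3}; that is, the expression is invariant under the symmetry group S₃ acting on (w₁,w₂,w₃). -/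
open Finset

/-- The `q`-number `[x]_q = (1 - q^x)/(1 - q)` of a nonnegative integer `x`. -/
noncomputable def qnum {K : Type*} [Field K] (q : K) (x : ℕ) : K :=
  (1 - q ^ x) / (1 - q)

/-- The generalized Carlitz `q`-Bernoulli polynomials
`β_{n,q}^{(h)}(x) = (1-q)^{-n} ∑_{j=0}^{n} C(n,j) (-1)^j q^{jx} (j+h)/[j+h]_q`;
`β_{n,q}(x) = β_{n,q}^{(1)}(x)`. -/
noncomputable def carlitzBetaH {K : Type*} [Field K] (q : K) (h n x : ℕ) : K :=
  ((1 - q) ^ n)⁻¹ * ∑ j ∈ Finset.range (n + 1),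
    (n.choose j : K) * (-1) ^ j * q ^ (j * x) * ((j + h : ℕ) : K) / qnum q (j + h)

/-- The multinomial coefficient `binom(n; k, l, m) = n! / (k! l! m!)`. -/
def multi3 (n k l m : ℕ) : ℕ :=
  n.factorial / (k.factorial * l.factorial * m.factorial)

/-- The expression `E(w₁,w₂,w₃)` of Statement 0: the sum over all `k + l + m = n` of
`binom(n;k,l,m) [w₂w₃]_q^k [w₁w₃]_q^l [w₁w₂]_q^m q^{w₁w₂w₃(l+m)y₁} q^{w₁w₂w₃ m y₂}
  β_{k,q^{w₂w₃}}^{(l+m+1)}(w₁y₁) β_{l,q^{w₁w₃}}^{(m+1)}(w₂y₂) β_{m,q^{w₁w₂}}(w₃y₃)`. -/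
noncomputable def E0 {K : Type*} [Field K] (q : K) (n y1 y2 y3 w1 w2 w3 : ℕ) : K :=
  ∑ k ∈ Finset.range (n + 1), ∑ l ∈ Finset.range (n + 1 - k),
    (multi3 n k l (n - k - l) : K) *
      qnum q (w2 * w3) ^ k * qnum q (w1 * w3) ^ l * qnum q (w1 * w2) ^ (n - k - l) *
      q ^ (w1 * w2 * w3 * (l + (n - k - l)) * y1) *
      q ^ (w1 * w2 * w3 * (n - k - l) * y2) *
      carlitzBetaH (q ^ (w2 * w3)) (l + (n - k - l) + 1) k (w1 * y1) *
      carlitzBetaH (q ^ (w1 * w3)) ((n - k - l) + 1) l (w2 * y2) *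
      carlitzBetaH (q ^ (w1 * w2)) 1 (n - k - l) (w3 * y3)

/-!
Write `f_{Q,x}(a) = Q^{xa} (a+1)/[a+1]_Q` and `Δ` for the forward difference. Then
`Q^{xs} β^{(s+1)}_{k,Q}(x) = (Q-1)^{-k} Δ^k f_{Q,x}(s)`, and since `[P]_q / (q^P - 1) = 1/(q-1)`,
the summand of `E(w₁,w₂,w₃)` indexed by `(k,l,m)` is `(q-1)^{-n}` times the corresponding term
of the Leibniz expansion of `Δ^n (f₁ f₂ f₃)(0)`, where `f₁ = f_{q^{w₂w₃},w₁y₁}`,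
`f₂ = f_{q^{w₁w₃},w₂y₂}`, `f₃ = f_{q^{w₁w₂},w₃y₃}`. So `E(w₁,w₂,w₃) = (q-1)^{-n} Δ^n (f₁ f₂ f₃)(0)`,
and the product
`(f₁ f₂ f₃)(a) = q^{w₁w₂w₃(y₁+y₂+y₃)a} (a+1)³ / ([a+1]_{q^{w₂w₃}}[a+1]_{q^{w₁w₃}}[a+1]_{q^{w₁w₂}})`
is symmetric in `w₁, w₂, w₃`.
-/

open fwdDiff

theorem apply_comp_perm_eq_of_apply_comp_swap {n : ℕ} {α β : Type*} (F : (Fin (n + 1) → α) → β)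
    (hF : ∀ (i : Fin n) (w : Fin (n + 1) → α), F (w ∘ Equiv.swap i.castSucc i.succ) = F w)
    (σ : Equiv.Perm (Fin (n + 1))) (w : Fin (n + 1) → α) : F (w ∘ σ) = F w := by
  have hσ : σ ∈ Submonoid.closure (Set.range fun i : Fin n ↦ Equiv.swap i.castSucc i.succ) := by
    rw [Equiv.Perm.mclosure_swap_castSucc_succ]; trivial
  induction hσ using Submonoid.closure_induction generalizing w with
  | mem τ hτ => obtain ⟨i, rfl⟩ := hτ; exact hF i w
  | one => rfl
  | mul σ τ _ _ hσ hτ => rw [Equiv.Perm.coe_mul, ← Function.comp_assoc, hτ, hσ]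

section Leibniz

variable {M R : Type*} [AddCommMonoid M] [CommRing R] (h : M)

theorem fwdDiff_iter_succ_apply (f : M → R) (n : ℕ) (y : M) :
    Δ_[h] ^[n + 1] f y = Δ_[h] ^[n] f (y + h) - Δ_[h] ^[n] f y := by
  rw [Function.iterate_succ_apply']; rfl

theorem fwdDiff_iter_mul (f g : M → R) (n : ℕ) (y : M) :
    Δ_[h] ^[n] (f * g) y = ∑ ij ∈ antidiagonal n,
      (n.choose ij.1 : R) * (Δ_[h] ^[ij.1] f (y + ij.2 • h) * Δ_[h] ^[ij.2] g y) := by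
  induction n generalizing y with
  | zero => simp
  | succ n ih =>
    rw [sum_antidiagonal_choose_succ_mul
      (fun i j ↦ Δ_[h] ^[i] f (y + j • h) * Δ_[h] ^[j] g y), fwdDiff_iter_succ_apply, ih, ih,
      ← sum_sub_distrib, ← sum_add_distrib]
    refine sum_congr rfl fun ij hij ↦ ?_
    rw [Nat.choose_symm_of_eq_add (mem_antidiagonal.1 hij).symm, fwdDiff_iter_succ_apply,
      fwdDiff_iter_succ_apply, succ_nsmul, ← add_assoc, add_right_comm y h]
    ring

theorem fwdDiff_iter_mul_mul (f g k : M → R) (n : ℕ) (y : M) :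
    Δ_[h] ^[n] (f * g * k) y = ∑ i ∈ range (n + 1), ∑ j ∈ range (n - i + 1),
      (n.choose i : R) * ((n - i).choose j : R) * (Δ_[h] ^[i] f (y + (n - i) • h)
        * Δ_[h] ^[j] g (y + (n - i - j) • h) * Δ_[h] ^[n - i - j] k y) := by
  rw [mul_assoc, fwdDiff_iter_mul, Nat.sum_antidiagonal_eq_sum_range_succ_mk]
  refine sum_congr rfl fun i _ ↦ ?_
  rw [fwdDiff_iter_mul, Nat.sum_antidiagonal_eq_sum_range_succ_mk, mul_sum, mul_sum]
  refine sum_congr rfl fun j _ ↦ ?_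
  ring

end Leibniz

theorem multi3_eq_choose_mul_choose {n k l m : ℕ} (h : k + l + m = n) :
    multi3 n k l m = n.choose k * (n - k).choose l := by
  have hfac : n.factorial
      = n.choose k * (n - k).choose l * (k.factorial * l.factorial * m.factorial) := by
    rw [← Nat.choose_mul_factorial_mul_factorial (show k ≤ n by omega),
      ← Nat.choose_mul_factorial_mul_factorial (show l ≤ n - k by omega),
      show n - k - l = m by omega]
    ring
  rw [multi3, hfac, Nat.mul_div_cancel _ (by positivity)]

section Carlitz

variable {K : Type*} [Field K]

theorem qnum_eq_div (q : K) (x : ℕ) : qnum q x = (q ^ x - 1) / (q - 1) := by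
  rw [qnum, ← neg_sub, ← neg_sub q, neg_div_neg_eq]

noncomputable def carlitzSummand (Q : K) (x a : ℕ) : K :=
  Q ^ (x * a) * ((a + 1 : ℕ) : K) / qnum Q (a + 1)

theorem fwdDiff_iter_carlitzSummand {Q : K} (hQ : Q ≠ 1) (k x s : ℕ) :
    Δ_[1] ^[k] (carlitzSummand Q x) s
      = (Q - 1) ^ k * (Q ^ (x * s) * carlitzBetaH Q (s + 1) k x) := by
  have hsign : (Q - 1) ^ k * ((1 - Q) ^ k)⁻¹ = (-1) ^ k := by
    rw [← neg_sub, neg_pow, mul_assoc, mul_inv_cancel₀ (pow_ne_zero k (sub_ne_zero.2 hQ.symm)),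
      mul_one]
  rw [carlitzBetaH, fwdDiff_iter_eq_sum_shift, mul_left_comm, ← mul_assoc ((Q - 1) ^ k), hsign]
  simp only [mul_sum]
  refine sum_congr rfl fun i hi ↦ ?_
  have hik : i ≤ k := Nat.lt_succ_iff.1 (mem_range.1 hi)
  have hpow : (-1 : K) ^ (k - i) = (-1) ^ k * (-1) ^ i := by
    rw [← pow_add, show k + i = (k - i) + 2 * i by omega, pow_add, pow_mul, neg_one_sq,
      one_pow, mul_one]
  rw [zsmul_eq_mul, carlitzSummand, smul_eq_mul, mul_one, show i + (s + 1) = s + i + 1 by ring,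
    mul_add, pow_add, mul_comm x i]
  push_cast
  rw [hpow]
  ring

theorem E0_summand_eq {q : K} (hq : q ≠ 1) {w₁ w₂ w₃ : ℕ} (h₂₃ : q ^ (w₂ * w₃) ≠ 1)
    (h₁₃ : q ^ (w₁ * w₃) ≠ 1) (h₁₂ : q ^ (w₁ * w₂) ≠ 1) (y₁ y₂ y₃ k l m : ℕ) :
    (multi3 (k + l + m) k l m : K) * qnum q (w₂ * w₃) ^ k * qnum q (w₁ * w₃) ^ l
      * qnum q (w₁ * w₂) ^ m * q ^ (w₁ * w₂ * w₃ * (l + m) * y₁) * q ^ (w₁ * w₂ * w₃ * m * y₂)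
      * carlitzBetaH (q ^ (w₂ * w₃)) (l + m + 1) k (w₁ * y₁)
      * carlitzBetaH (q ^ (w₁ * w₃)) (m + 1) l (w₂ * y₂)
      * carlitzBetaH (q ^ (w₁ * w₂)) 1 m (w₃ * y₃)
    = ((q - 1) ^ (k + l + m))⁻¹ * ((k + l + m).choose k * (l + m).choose l
      * (Δ_[1] ^[k] (carlitzSummand (q ^ (w₂ * w₃)) (w₁ * y₁)) (l + m)
        * Δ_[1] ^[l] (carlitzSummand (q ^ (w₁ * w₃)) (w₂ * y₂)) m
        * Δ_[1] ^[m] (carlitzSummand (q ^ (w₁ * w₂)) (w₃ * y₃)) 0)) := by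
  rw [multi3_eq_choose_mul_choose rfl, show k + l + m - k = l + m by omega,
    fwdDiff_iter_carlitzSummand h₂₃, fwdDiff_iter_carlitzSummand h₁₃,
    fwdDiff_iter_carlitzSummand h₁₂]
  have hq₁ : q - 1 ≠ 0 := sub_ne_zero.2 hq
  have h₂₃' : q ^ (w₂ * w₃) - 1 ≠ 0 := sub_ne_zero.2 h₂₃
  have h₁₃' : q ^ (w₁ * w₃) - 1 ≠ 0 := sub_ne_zero.2 h₁₃
  have h₁₂' : q ^ (w₁ * w₂) - 1 ≠ 0 := sub_ne_zero.2 h₁₂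
  simp only [qnum_eq_div, div_pow, ← pow_mul]
  field_simp
  push_cast
  ring

noncomputable def symmetricSummand (q : K) (y w₁ w₂ w₃ a : ℕ) : K :=
  q ^ (w₁ * w₂ * w₃ * y * a) * ((a + 1 : ℕ) : K) ^ 3 /
    (qnum (q ^ (w₂ * w₃)) (a + 1) * qnum (q ^ (w₁ * w₃)) (a + 1) * qnum (q ^ (w₁ * w₂)) (a + 1))

theorem carlitzSummand_mul_mul (q : K) (y₁ y₂ y₃ w₁ w₂ w₃ : ℕ) :
    carlitzSummand (q ^ (w₂ * w₃)) (w₁ * y₁) * carlitzSummand (q ^ (w₁ * w₃)) (w₂ * y₂)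
      * carlitzSummand (q ^ (w₁ * w₂)) (w₃ * y₃) = symmetricSummand q (y₁ + y₂ + y₃) w₁ w₂ w₃ := by
  funext a
  simp only [Pi.mul_apply, carlitzSummand, symmetricSummand, ← pow_mul]
  ring

theorem E0_eq_fwdDiff {q : K} (hq : ∀ n : ℕ, 0 < n → q ^ n ≠ 1) {w₁ w₂ w₃ : ℕ}
    (h₁ : 0 < w₁) (h₂ : 0 < w₂) (h₃ : 0 < w₃) (n y₁ y₂ y₃ : ℕ) :
    E0 q n y₁ y₂ y₃ w₁ w₂ w₃
      = ((q - 1) ^ n)⁻¹ * Δ_[1] ^[n] (symmetricSummand q (y₁ + y₂ + y₃) w₁ w₂ w₃) 0 := by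
  rw [← carlitzSummand_mul_mul, fwdDiff_iter_mul_mul, mul_sum, E0]
  refine sum_congr rfl fun k hk ↦ ?_
  rw [Nat.sub_add_comm (Nat.lt_succ_iff.1 (mem_range.1 hk)), mul_sum]
  refine sum_congr rfl fun l hl ↦ ?_
  obtain ⟨m, rfl⟩ : ∃ m, n = k + l + m := ⟨n - k - l, by simp at hk hl; omega⟩
  simp only [zero_add, smul_eq_mul, mul_one, show k + l + m - k = l + m by omega,
    show l + m - l = m by omega]
  exact E0_summand_eq (by simpa using hq 1 one_pos) (hq _ (Nat.mul_pos h₂ h₃))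
    (hq _ (Nat.mul_pos h₁ h₃)) (hq _ (Nat.mul_pos h₁ h₂)) y₁ y₂ y₃ k l m

theorem symmetricSummand_swap₁₂ (q : K) (y w₁ w₂ w₃ : ℕ) :
    symmetricSummand q y w₂ w₁ w₃ = symmetricSummand q y w₁ w₂ w₃ := by
  funext a
  simp only [symmetricSummand, mul_comm w₂ w₁]
  ring

theorem symmetricSummand_swap₂₃ (q : K) (y w₁ w₂ w₃ : ℕ) :
    symmetricSummand q y w₁ w₃ w₂ = symmetricSummand q y w₁ w₂ w₃ := by
  funext a
  simp only [symmetricSummand, mul_comm w₃ w₂]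
  ring

theorem symmetricSummand_comp_swap (q : K) (y : ℕ) (i : Fin 2) (w : Fin 3 → ℕ) :
    symmetricSummand q y ((w ∘ Equiv.swap i.castSucc i.succ) 0)
      ((w ∘ Equiv.swap i.castSucc i.succ) 1) ((w ∘ Equiv.swap i.castSucc i.succ) 2)
      = symmetricSummand q y (w 0) (w 1) (w 2) := by
  fin_cases i
  · simpa [Equiv.swap_apply_of_ne_of_ne] using symmetricSummand_swap₁₂ q y (w 0) (w 1) (w 2)
  · simpa [Equiv.swap_apply_of_ne_of_ne] using symmetricSummand_swap₂₃ q y (w 0) (w 1) (w 2)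

end Carlitz

theorem stmt0_general {K : Type*} [Field K] (q : K)
    (hq' : ∀ n : ℕ, 0 < n → q ^ n ≠ 1)
    (w : Fin 3 → ℕ) (hw : ∀ i, 0 < w i) (y1 y2 y3 n : ℕ) (σ : Equiv.Perm (Fin 3)) :
    E0 q n y1 y2 y3 (w (σ 0)) (w (σ 1)) (w (σ 2))
      = E0 q n y1 y2 y3 (w 0) (w 1) (w 2) := by
  have hsymm : symmetricSummand q (y1 + y2 + y3) (w (σ 0)) (w (σ 1)) (w (σ 2))
      = symmetricSummand q (y1 + y2 + y3) (w 0) (w 1) (w 2) :=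
    apply_comp_perm_eq_of_apply_comp_swap
      (fun v ↦ symmetricSummand q (y1 + y2 + y3) (v 0) (v 1) (v 2))
      (symmetricSummand_comp_swap q _) σ w
  rw [E0_eq_fwdDiff hq' (hw _) (hw _) (hw _), E0_eq_fwdDiff hq' (hw _) (hw _) (hw _), hsymm]

/-- Theorem 1 of the paper.  The expression `E(w₁,w₂,w₃)` is invariant
under any permutation of `(w₁, w₂, w₃)`. -/
theorem stmt0 {K : Type*} [Field K] [CharZero K] (q : K) (hq : q ≠ 1)
    (hq' : ∀ n : ℕ, 0 < n → q ^ n ≠ 1)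
    (w : Fin 3 → ℕ) (hw : ∀ i, 0 < w i) (y1 y2 y3 n : ℕ) (σ : Equiv.Perm (Fin 3)) :
    E0 q n y1 y2 y3 (w (σ 0)) (w (σ 1)) (w (σ 2))
      = E0 q n y1 y2 y3 (w 0) (w 1) (w 2) :=
  stmt0_general q hq' w hw y1 y2 y3 n σ
end

section
/- Let w₁, w₂, w₃ be positive integers and m an integer with m ≥ 1. Then [w₁w₂]_q^m · ( q^{w₁w₂w₃} · β_{m,q^{w₁w₂}}(w₃) − β_{m,q^{w₁w₂}} ) = m · [w₁w₂]_q^m · T_{2,m−1}(w₃−1 | q^{w₁w₂}) + (q−1) · [w₁w₂]_q^{m+1} · T_{1,m}(w₃−1 | q^{w₁w₂}). Equivalently, writing Q = q^{w₁w₂}: Q^{w₃} β_{m,Q}(w₃) − β_{m,Q} = m·T_{2,m−1}(w₃−1|Q) + (Q−1)·T_{1,m}(w₃−1|Q). -/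
open Finset

/-- The Carlitz `q`-Bernoulli polynomials
`β_{n,q}(x) = (1-q)^{-n} ∑_{l=0}^{n} C(n,l) (-1)^l q^{lx} (l+1)/[l+1]_q`;
`β_{n,q} = β_{n,q}(0)` are the Carlitz `q`-Bernoulli numbers. -/
noncomputable def carlitzBeta {K : Type*} [Field K] (q : K) (n x : ℕ) : K :=
  ((1 - q) ^ n)⁻¹ * ∑ l ∈ Finset.range (n + 1),
    (n.choose l : K) * (-1) ^ l * q ^ (l * x) * ((l + 1 : ℕ) : K) / qnum q (l + 1)

/-- The `q`-power sums `T_{n,m}(w|q) = ∑_{i=0}^{w} q^{ni} [i]_q^m`. -/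
noncomputable def qT {K : Type*} [Field K] (q : K) (n m w : ℕ) : K :=
  ∑ i ∈ Finset.range (w + 1), q ^ (n * i) * qnum q i ^ m

/-!
Multiplying `β_{n,Q}(x)` by `Q^x` turns each summand into a multiple of `y^(l+1)/[l+1]_Q` with
`y = Q^x`. Passing from `x` to `x + 1` multiplies `y^(l+1)` by `Q^(l+1)`, and the factor
`Q^(l+1) - 1 = (Q - 1)[l+1]_Q` cancels the denominator. What is left is
`(Q - 1)(1 - Q)^(-n) ∑ C(n,l) (-1)^l (l+1) y^(l+1) = (Q - 1)(1 - Q)^(-n) y (y (1 - y)^n)'`, which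
with `1 - y = (1 - Q)[x]_Q` is the `x`-th summand of `n T_{2,n-1} + (Q - 1) T_{1,n}`.
Summing over `x < w` telescopes; for `Q = q^(w₁w₂)` one has `(q - 1)[w₁w₂]_q = Q - 1`.
-/

section Binomial

variable {R : Type*} [CommRing R]

lemma sum_range_choose_mul_neg_one_pow_mul_pow (y : R) (n : ℕ) :
    ∑ l ∈ range (n + 1), (n.choose l : R) * (-1) ^ l * y ^ l = (1 - y) ^ n := by
  rw [sub_eq_add_neg, add_comm 1, add_pow]
  refine sum_congr rfl fun l _ => ?_
  rw [one_pow, neg_pow]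
  ring

lemma sum_range_choose_mul_neg_one_pow_mul_cast_mul_pow (y : R) (n : ℕ) :
    ∑ l ∈ range (n + 1), (n.choose l : R) * (-1) ^ l * l * y ^ l
      = -(n * y * (1 - y) ^ (n - 1)) := by
  cases n with
  | zero => simp
  | succ n =>
    rw [sum_range_succ', Nat.add_sub_cancel, ← sum_range_choose_mul_neg_one_pow_mul_pow, mul_sum,
      ← sum_neg_distrib]
    simp only [Nat.cast_zero, mul_zero, zero_mul, add_zero]
    refine sum_congr rfl fun l _ => ?_
    have hchoose := congr_arg (Nat.cast : ℕ → R) (Nat.add_one_mul_choose_eq n l)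
    push_cast at hchoose ⊢
    linear_combination -(-1) ^ (l + 1) * y ^ (l + 1) * hchoose

/-- `∑ C(n,l) (-1)^l (l+1) y^(l+1)` is `y (d/dy) (y (1-y)^n)`. -/
lemma sum_range_choose_mul_neg_one_pow_mul_succ_mul_pow_succ (y : R) (n : ℕ) :
    ∑ l ∈ range (n + 1), (n.choose l : R) * (-1) ^ l * (l + 1 : ℕ) * y ^ (l + 1)
      = y * (1 - y) ^ n - n * y ^ 2 * (1 - y) ^ (n - 1) := by
  calc _ = y * ∑ l ∈ range (n + 1), (n.choose l : R) * (-1) ^ l * y ^ l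
        + y * ∑ l ∈ range (n + 1), (n.choose l : R) * (-1) ^ l * l * y ^ l := by
        rw [mul_sum, mul_sum, ← sum_add_distrib]
        refine sum_congr rfl fun l _ => ?_
        push_cast
        ring
    _ = _ := by
        rw [sum_range_choose_mul_neg_one_pow_mul_pow,
          sum_range_choose_mul_neg_one_pow_mul_cast_mul_pow]
        ring

end Binomial

section CarlitzBeta

variable {K : Type*} [Field K] {Q : K}

lemma one_sub_mul_qnum (hQ : Q ≠ 1) (x : ℕ) : (1 - Q) * qnum Q x = 1 - Q ^ x :=
  mul_div_cancel₀ _ (sub_ne_zero.mpr hQ.symm)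

lemma qnum_ne_zero (hQ : ¬IsOfFinOrder Q) {k : ℕ} (hk : k ≠ 0) : qnum Q k ≠ 0 := by
  rw [isOfFinOrder_iff_pow_eq_one] at hQ
  push Not at hQ
  exact div_ne_zero (sub_ne_zero.mpr (hQ k (Nat.pos_of_ne_zero hk)).symm)
    (sub_ne_zero.mpr (by simpa using (hQ 1 one_pos).symm))

lemma pow_mul_carlitzBeta (Q : K) (n x : ℕ) :
    Q ^ x * carlitzBeta Q n x = ((1 - Q) ^ n)⁻¹ * ∑ l ∈ range (n + 1),
      (n.choose l : K) * (-1) ^ l * (l + 1 : ℕ) * (Q ^ x) ^ (l + 1) / qnum Q (l + 1) := by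
  rw [carlitzBeta, mul_left_comm, mul_sum]
  refine congr_arg _ (sum_congr rfl fun l _ => ?_)
  rw [mul_comm l x, pow_mul, pow_succ]
  ring

lemma pow_succ_mul_carlitzBeta_sub (hQ : ¬IsOfFinOrder Q) (n x : ℕ) :
    Q ^ (x + 1) * carlitzBeta Q n (x + 1) - Q ^ x * carlitzBeta Q n x
      = n * Q ^ (2 * x) * qnum Q x ^ (n - 1) + (Q - 1) * Q ^ x * qnum Q x ^ n := by
  have hQ1 : Q ≠ 1 := fun h => hQ (h ▸ IsOfFinOrder.one)
  rw [pow_mul_carlitzBeta, pow_mul_carlitzBeta, ← mul_sub, ← sum_sub_distrib]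
  have hterm : ∀ l ∈ range (n + 1),
      (n.choose l : K) * (-1) ^ l * (l + 1 : ℕ) * (Q ^ (x + 1)) ^ (l + 1) / qnum Q (l + 1)
        - (n.choose l : K) * (-1) ^ l * (l + 1 : ℕ) * (Q ^ x) ^ (l + 1) / qnum Q (l + 1)
      = (Q - 1) * ((n.choose l : K) * (-1) ^ l * (l + 1 : ℕ) * (Q ^ x) ^ (l + 1)) := by
    intro l _
    rw [div_sub_div_same, div_eq_iff (qnum_ne_zero hQ l.succ_ne_zero)]
    linear_combination (n.choose l : K) * (-1) ^ l * (l + 1 : ℕ) * (Q ^ x) ^ (l + 1) *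
      one_sub_mul_qnum hQ1 (l + 1)
  rw [sum_congr rfl hterm, ← mul_sum, sum_range_choose_mul_neg_one_pow_mul_succ_mul_pow_succ,
    ← one_sub_mul_qnum hQ1 x, mul_pow, mul_pow, pow_mul' Q 2 x]
  have hQ1' : 1 - Q ≠ 0 := sub_ne_zero.mpr hQ1.symm
  cases n with
  | zero => field_simp; ring
  | succ n =>
    rw [Nat.add_sub_cancel]
    field_simp
    ring

lemma pow_succ_mul_carlitzBeta_sub_carlitzBeta (hQ : ¬IsOfFinOrder Q) (n w : ℕ) :
    Q ^ (w + 1) * carlitzBeta Q n (w + 1) - carlitzBeta Q n 0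
      = n * qT Q 2 (n - 1) w + (Q - 1) * qT Q 1 n w := by
  have htelescope := sum_range_sub (fun i => Q ^ i * carlitzBeta Q n i) (w + 1)
  simp only [pow_zero, one_mul, pow_succ_mul_carlitzBeta_sub hQ] at htelescope
  rw [← htelescope, qT, qT, mul_sum, mul_sum, ← sum_add_distrib]
  refine sum_congr rfl fun i _ => ?_
  ring

end CarlitzBeta

theorem stmt1_general {K : Type*} [Field K] (q : K)
    (hq' : ∀ n : ℕ, 0 < n → q ^ n ≠ 1)
    (w1 w2 w3 : ℕ) (hw1 : 0 < w1) (hw2 : 0 < w2) (hw3 : 0 < w3)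
    (m : ℕ) :
    qnum q (w1 * w2) ^ m *
        (q ^ (w1 * w2 * w3) * carlitzBeta (q ^ (w1 * w2)) m w3
          - carlitzBeta (q ^ (w1 * w2)) m 0)
      = (m : K) * qnum q (w1 * w2) ^ m * qT (q ^ (w1 * w2)) 2 (m - 1) (w3 - 1)
        + (q - 1) * qnum q (w1 * w2) ^ (m + 1) * qT (q ^ (w1 * w2)) 1 m (w3 - 1) := by
  obtain ⟨w, rfl⟩ := Nat.exists_eq_add_one.mpr hw3
  have hq : ¬IsOfFinOrder q := by
    rw [isOfFinOrder_iff_pow_eq_one]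
    exact fun ⟨n, hn, hqn⟩ => hq' n hn hqn
  have hQ : ¬IsOfFinOrder (q ^ (w1 * w2)) := by
    rw [isOfFinOrder_pow]
    exact not_or_intro hq (Nat.mul_pos hw1 hw2).ne'
  have hq1 : q ≠ 1 := fun h => hq (h ▸ IsOfFinOrder.one)
  rw [Nat.add_sub_cancel, pow_mul q (w1 * w2), pow_succ_mul_carlitzBeta_sub_carlitzBeta hQ]
  linear_combination qnum q (w1 * w2) ^ m * qT (q ^ (w1 * w2)) 1 m w *
    one_sub_mul_qnum hq1 (w1 * w2)

/-- For positive integers `w₁, w₂, w₃` and `m ≥ 1`, with `Q = q^{w₁w₂}`,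
`[w₁w₂]_q^m (q^{w₁w₂w₃} β_{m,Q}(w₃) - β_{m,Q})
  = m [w₁w₂]_q^m T_{2,m-1}(w₃-1|Q) + (q-1) [w₁w₂]_q^{m+1} T_{1,m}(w₃-1|Q)`. -/
theorem stmt1 {K : Type*} [Field K] [CharZero K] (q : K) (hq : q ≠ 1)
    (hq' : ∀ n : ℕ, 0 < n → q ^ n ≠ 1)
    (w1 w2 w3 : ℕ) (hw1 : 0 < w1) (hw2 : 0 < w2) (hw3 : 0 < w3)
    (m : ℕ) (hm : 1 ≤ m) :
    qnum q (w1 * w2) ^ m *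
        (q ^ (w1 * w2 * w3) * carlitzBeta (q ^ (w1 * w2)) m w3
          - carlitzBeta (q ^ (w1 * w2)) m 0)
      = (m : K) * qnum q (w1 * w2) ^ m * qT (q ^ (w1 * w2)) 2 (m - 1) (w3 - 1)
        + (q - 1) * qnum q (w1 * w2) ^ (m + 1) * qT (q ^ (w1 * w2)) 1 m (w3 - 1) :=
  stmt1_general q hq' w1 w2 w3 hw1 hw2 hw3 m
end

section
/- For all nonnegative integers n, x, y: β_{n,q}(x+y) = ∑_{l=0}^{n} binom(n,l) · q^{l x} · β_{l,q}(y) · [x]_q^{n−l}. -/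
open Finset

/-!
Write `β_{n,q}(x) = (1-q)^{-n} ∑_m C(n,m) w_m (q^x)^m` with `w_m = (-1)^m (m+1)/[m+1]_q`.
Both sides of the addition formula are then images, under the linear functional
`X^m ↦ w_m q^{my}` on polynomials, of the two sides of the binomial expansion of
`(1 + q^x X)^n = (q^x (1 + X) + (1 - q^x))^n`; the factor `[x]_q^{n-l} = (1-q^x)^{n-l}/(1-q)^{n-l}`
combines with `(1-q)^{-l}` from `β_{l,q}(y)` into `(1-q)^{-n}`.
-/

open Polynomial

namespace Polynomial

variable {R : Type*} [CommSemiring R]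

noncomputable def umbral (c : ℕ → R) : R[X] →ₗ[R] R :=
  lsum fun m => LinearMap.mulRight R (c m)

theorem umbral_monomial (c : ℕ → R) (m : ℕ) (a : R) : umbral c (monomial m a) = a * c m := by
  simp [umbral, sum_monomial_index]

theorem umbral_C_mul_X_add_one_pow (c : ℕ → R) (a : R) (k : ℕ) :
    umbral c ((C a * X + 1) ^ k) = ∑ m ∈ range (k + 1), (k.choose m : R) * a ^ m * c m := by
  rw [add_pow, map_sum]
  refine sum_congr rfl fun m _ => ?_
  rw [one_pow, mul_one, mul_pow, ← C_pow, ← Nat.cast_comm, ← mul_assoc, ← C_eq_natCast, ← C_mul,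
    C_mul_X_pow_eq_monomial, umbral_monomial]

end Polynomial

theorem sum_choose_mul_pow_mul_eq_sum_bernstein_mul {R : Type*} [CommRing R]
    (c : ℕ → R) (t : R) (n : ℕ) :
    ∑ m ∈ range (n + 1), (n.choose m : R) * t ^ m * c m
      = ∑ l ∈ range (n + 1), (n.choose l : R) * t ^ l * (1 - t) ^ (n - l)
          * ∑ m ∈ range (l + 1), (l.choose m : R) * c m := by
  have hexpand : (C t * X + 1) ^ n = ∑ l ∈ range (n + 1),
      ((n.choose l : R) * t ^ l * (1 - t) ^ (n - l)) • (C 1 * X + 1) ^ l := by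
    have hsplit : C t * X + 1 = C t * (C 1 * X + 1) + C (1 - t) := by
      simp only [C_sub, C_1]; ring
    rw [hsplit, add_pow]
    refine sum_congr rfl fun l _ => ?_
    rw [smul_eq_C_mul, mul_pow]
    simp only [map_mul, map_pow, map_natCast]
    ring
  simpa only [map_sum, map_smul, umbral_C_mul_X_add_one_pow, one_pow, mul_one, smul_eq_mul]
    using congrArg (umbral c) hexpand

section Carlitz

variable {K : Type*} [Field K]

noncomputable def carlitzWeight (q : K) (m : ℕ) : K :=
  (-1) ^ m * ((m + 1 : ℕ) : K) / qnum q (m + 1)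

theorem carlitzBeta_eq_sum (q : K) (n x : ℕ) :
    carlitzBeta q n x = ((1 - q) ^ n)⁻¹
      * ∑ m ∈ range (n + 1), (n.choose m : K) * (q ^ x) ^ m * carlitzWeight q m := by
  unfold carlitzBeta carlitzWeight
  congr 1
  refine sum_congr rfl fun m _ => ?_
  rw [← pow_mul, mul_comm x m]
  ring

end Carlitz

theorem stmt4_general {K : Type*} [Field K] (q : K) (n x y : ℕ) :
    carlitzBeta q n (x + y)
      = ∑ l ∈ Finset.range (n + 1),
          (n.choose l : K) * q ^ (l * x) * carlitzBeta q l y * qnum q x ^ (n - l) := by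
  have hsplit : ∑ m ∈ range (n + 1), (n.choose m : K) * (q ^ (x + y)) ^ m * carlitzWeight q m
      = ∑ m ∈ range (n + 1), (n.choose m : K) * (q ^ x) ^ m * ((q ^ y) ^ m * carlitzWeight q m) :=
    sum_congr rfl fun m _ => by rw [pow_add, mul_pow]; ring
  rw [carlitzBeta_eq_sum, hsplit, sum_choose_mul_pow_mul_eq_sum_bernstein_mul, mul_sum]
  refine sum_congr rfl fun l hl => ?_
  have hn : (1 - q) ^ n = (1 - q) ^ l * (1 - q) ^ (n - l) := by
    rw [← pow_add, Nat.add_sub_cancel' (Nat.lt_succ_iff.mp (mem_range.mp hl))]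
  have hinner : ∑ m ∈ range (l + 1), (l.choose m : K) * ((q ^ y) ^ m * carlitzWeight q m)
      = ∑ m ∈ range (l + 1), (l.choose m : K) * (q ^ y) ^ m * carlitzWeight q m :=
    sum_congr rfl fun m _ => (mul_assoc _ _ _).symm
  rw [carlitzBeta_eq_sum, hinner, qnum, div_pow, hn, mul_inv, mul_comm l x, pow_mul]
  ring

/-- For all nonnegative integers `n`, `x`, `y`,
`β_{n,q}(x+y) = ∑_{l=0}^{n} C(n,l) q^{lx} β_{l,q}(y) [x]_q^{n-l}`. -/
theorem stmt4 {K : Type*} [Field K] [CharZero K] (q : K) (hq : q ≠ 1)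
    (hq' : ∀ n : ℕ, 0 < n → q ^ n ≠ 1) (n x y : ℕ) :
    carlitzBeta q n (x + y)
      = ∑ l ∈ Finset.range (n + 1),
          (n.choose l : K) * q ^ (l * x) * carlitzBeta q l y * qnum q x ^ (n - l) :=
  stmt4_general q n x y
end

section
/- The Carlitz q-Bernoulli numbers defined by the explicit formula satisfy Carlitz's recurrence: β_{0,q} = 1, and for every integer n ≥ 1, q · ∑_{l=0}^{n} binom(n,l) · q^{l} · β_{l,q} − β_{n,q} equals 1 if n = 1 and equals 0 if n > 1. -/
open Finset

/-- The Carlitz `q`-Bernoulli numbers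
`β_{n,q} = (1-q)^{-n} ∑_{l=0}^{n} C(n,l) (-1)^l (l+1)/[l+1]_q`. -/
noncomputable def carlitzBetaNum {K : Type*} [Field K] (q : K) (n : ℕ) : K :=
  ((1 - q) ^ n)⁻¹ * ∑ l ∈ Finset.range (n + 1),
    (n.choose l : K) * (-1) ^ l * ((l + 1 : ℕ) : K) / qnum q (l + 1)

/-!
Multiplied by `(1 - q)^n`, `β_{n,q}` is the binomial transform `∑ C(n,l) t_l` of
`t_l = (-1)^l (l+1)/[l+1]_q`. Since `q + (1 - q) = 1`, the binomial theorem turns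
`(1 - q)^n ∑ C(n,l) q^l β_{l,q}` into `∑ C(n,l) q^l t_l`, so `(1 - q)^n` times the left side of
the recurrence is `∑ C(n,l) (q^{l+1} - 1) t_l = -(1 - q) ∑ C(n,l) (-1)^l (l+1)`, and this
alternating sum is `-δ_{n,1}` for `n ≥ 1`.
-/

section BinomialSums

variable {R : Type*} [CommSemiring R]

theorem sum_range_choose_mul_choose_mul_pow_mul_pow (x y : R) (j m : ℕ) :
    ∑ l ∈ range (j + m + 1), ((j + m).choose l : R) * l.choose j * x ^ l * y ^ (j + m - l)
      = (j + m).choose j * x ^ j * (x + y) ^ m := by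
  rw [add_assoc, sum_range_add, sum_eq_zero fun l hl => by
    rw [Nat.choose_eq_zero_of_lt (mem_range.1 hl)]; simp, zero_add, add_pow, mul_sum]
  refine sum_congr rfl fun k _ => ?_
  have hchoose : (j + m).choose (j + k) * (j + k).choose j = (j + m).choose j * m.choose k := by
    simpa using Nat.choose_mul (n := j + m) (Nat.le_add_right j k)
  calc ((j + m).choose (j + k) : R) * (j + k).choose j * x ^ (j + k) * y ^ (j + m - (j + k))
      = (((j + m).choose (j + k) * (j + k).choose j : ℕ) : R) * x ^ j * x ^ k * y ^ (m - k) := by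
        rw [Nat.add_sub_add_left, pow_add]; push_cast; ring
    _ = _ := by rw [hchoose]; push_cast; ring

theorem sum_range_choose_mul_pow_mul_pow_mul_sum_choose (x y : R) (a : ℕ → R) (n : ℕ) :
    ∑ l ∈ range (n + 1), (n.choose l : R) * x ^ l * y ^ (n - l) *
        ∑ j ∈ range (l + 1), (l.choose j : R) * a j
      = ∑ j ∈ range (n + 1), (n.choose j : R) * x ^ j * (x + y) ^ (n - j) * a j := by
  have hextend : ∀ l ∈ range (n + 1), ∑ j ∈ range (l + 1), (l.choose j : R) * a j
      = ∑ j ∈ range (n + 1), (l.choose j : R) * a j := fun l hl =>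
    sum_subset (range_subset_range.2 (by simpa using hl)) fun j _ hj => by
      rw [Nat.choose_eq_zero_of_lt (by simpa using hj), Nat.cast_zero, zero_mul]
  rw [sum_congr rfl fun l hl => by rw [hextend l hl, mul_sum], sum_comm]
  refine sum_congr rfl fun j hj => ?_
  obtain ⟨m, rfl⟩ := Nat.exists_eq_add_of_le (Nat.lt_succ_iff.1 (mem_range.1 hj))
  rw [Nat.add_sub_cancel_left, ← sum_range_choose_mul_choose_mul_pow_mul_pow x y, sum_mul]
  exact sum_congr rfl fun l _ => by ring

end BinomialSums

theorem sum_range_choose_mul_neg_one_pow_mul_succ {R : Type*} [CommRing R] (m : ℕ) :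
    ∑ j ∈ range (m + 2), ((m + 1).choose j : R) * ((-1) ^ j * (j + 1 : ℕ))
      = -if m = 0 then 1 else 0 := by
  -- after Pascal's rule the two halves combine termwise to `-(-1)^j C(m,j)`
  rw [sum_choose_succ_mul (fun j _ => (-1 : R) ^ j * (j + 1 : ℕ)), ← sum_add_distrib]
  have halt := congr((($(Int.alternating_sum_range_choose (n := m)) : ℤ) : R))
  push_cast at halt
  rw [← halt, ← sum_neg_distrib]
  refine sum_congr rfl fun j _ => ?_
  push_cast
  ring

section CarlitzBernoulli

variable {K : Type*} [Field K] {q : K}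

theorem one_sub_mul_qnum_s7 (hq : q ≠ 1) (n : ℕ) : (1 - q) * qnum q n = 1 - q ^ n :=
  mul_div_cancel₀ _ (sub_ne_zero.2 hq.symm)

theorem qnum_ne_zero_s7 {n : ℕ} (h : q ^ n ≠ 1) : qnum q n ≠ 0 :=
  div_ne_zero (sub_ne_zero.2 (Ne.symm h)) (sub_ne_zero.2 fun h1 => h (by rw [← h1, one_pow]))

variable (q) in
noncomputable def carlitzTerm (l : ℕ) : K :=
  (-1) ^ l * ((l + 1 : ℕ) : K) / qnum q (l + 1)

theorem one_sub_pow_mul_carlitzBetaNum (hq : q ≠ 1) (n : ℕ) :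
    (1 - q) ^ n * carlitzBetaNum q n = ∑ l ∈ range (n + 1), (n.choose l : K) * carlitzTerm q l := by
  rw [carlitzBetaNum, mul_inv_cancel_left₀ (pow_ne_zero n (sub_ne_zero.2 hq.symm))]
  simp only [carlitzTerm, mul_assoc, mul_div_assoc]

theorem pow_succ_sub_one_mul_carlitzTerm {l : ℕ} (h : q ^ (l + 1) ≠ 1) :
    (q ^ (l + 1) - 1) * carlitzTerm q l = -(1 - q) * ((-1) ^ l * (l + 1 : ℕ)) := by
  have hq : q ≠ 1 := fun h1 => h (by rw [h1, one_pow])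
  rw [carlitzTerm, ← neg_sub, ← one_sub_mul_qnum_s7 hq]
  field_simp [qnum_ne_zero_s7 h]

theorem one_sub_pow_mul_sum_choose_mul_pow_mul_carlitzBetaNum (hq : q ≠ 1) (n : ℕ) :
    (1 - q) ^ n * ∑ l ∈ range (n + 1), (n.choose l : K) * q ^ l * carlitzBetaNum q l
      = ∑ j ∈ range (n + 1), (n.choose j : K) * q ^ j * carlitzTerm q j := by
  have hsplit : ∀ l ∈ range (n + 1), (1 - q) ^ n * ((n.choose l : K) * q ^ l * carlitzBetaNum q l)
      = (n.choose l : K) * q ^ l * (1 - q) ^ (n - l) * ((1 - q) ^ l * carlitzBetaNum q l) :=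
    fun l hl => by
      rw [← pow_sub_mul_pow (1 - q) (Nat.lt_succ_iff.1 (mem_range.1 hl))]; ring
  simp_rw [mul_sum, sum_congr rfl hsplit, one_sub_pow_mul_carlitzBetaNum hq,
    sum_range_choose_mul_pow_mul_pow_mul_sum_choose, add_sub_cancel, one_pow, mul_one]

end CarlitzBernoulli

theorem stmt7_general {K : Type*} [Field K] (q : K)
    (hq' : ∀ n : ℕ, 0 < n → q ^ n ≠ 1) :
    carlitzBetaNum q 0 = 1 ∧
      ∀ n : ℕ, 1 ≤ n →
        q * (∑ l ∈ Finset.range (n + 1), (n.choose l : K) * q ^ l * carlitzBetaNum q l)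
            - carlitzBetaNum q n = if n = 1 then 1 else 0 := by
  have hq : q ≠ 1 := by simpa using hq' 1 one_pos
  have hc : (1 : K) - q ≠ 0 := sub_ne_zero.2 hq.symm
  refine ⟨by simp [carlitzBetaNum, qnum, hc], fun n hn => ?_⟩
  obtain ⟨m, rfl⟩ := Nat.exists_eq_add_of_le' hn
  refine mul_left_cancel₀ (pow_ne_zero (m + 1) hc) ?_
  calc (1 - q) ^ (m + 1) * (q * ∑ l ∈ range (m + 1 + 1), ((m + 1).choose l : K) * q ^ l *
          carlitzBetaNum q l - carlitzBetaNum q (m + 1))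
      = ∑ j ∈ range (m + 2), ((m + 1).choose j : K) * ((q ^ (j + 1) - 1) * carlitzTerm q j) := by
        rw [mul_sub, mul_left_comm, one_sub_pow_mul_sum_choose_mul_pow_mul_carlitzBetaNum hq,
          one_sub_pow_mul_carlitzBetaNum hq, mul_sum, ← sum_sub_distrib]
        exact sum_congr rfl fun j _ => by ring
    _ = -(1 - q) * ∑ j ∈ range (m + 2), ((m + 1).choose j : K) * ((-1) ^ j * (j + 1 : ℕ)) := by
        rw [mul_sum]
        exact sum_congr rfl fun j _ => by
          rw [pow_succ_sub_one_mul_carlitzTerm (hq' _ j.succ_pos)]; ring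
    _ = (1 - q) ^ (m + 1) * if m + 1 = 1 then 1 else 0 := by
        rw [sum_range_choose_mul_neg_one_pow_mul_succ]
        rcases m with _ | m <;> simp

/-- The Carlitz `q`-Bernoulli numbers satisfy Carlitz's recurrence:
`β_{0,q} = 1`, and for `n ≥ 1`,
`q ∑_{l=0}^{n} C(n,l) q^l β_{l,q} - β_{n,q}` equals `1` if `n = 1` and `0` if `n > 1`. -/
theorem stmt7 {K : Type*} [Field K] [CharZero K] (q : K) (hq : q ≠ 1)
    (hq' : ∀ n : ℕ, 0 < n → q ^ n ≠ 1) :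
    carlitzBetaNum q 0 = 1 ∧
      ∀ n : ℕ, 1 ≤ n →
        q * (∑ l ∈ Finset.range (n + 1), (n.choose l : K) * q ^ l * carlitzBetaNum q l)
            - carlitzBetaNum q n = if n = 1 then 1 else 0 :=
  stmt7_general q hq'
end
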